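/- For every real number θ with 0 < θ < π, Л(θ) = θ·(1 - log(2θ) + ∑_{n=1}^∞ |B_{2n}|·(2θ)^(2n) / (2n·(2n+1)!)), where B_{2n} denotes the 2n-th Bernoulli number; in particular the series on the right converges. -/

import Mathlib

/-!
Euler's product `sin (π x) = π x ∏ (1 - x² / j²)` gives
`log (t / sin t) = ∑_j -log (1 - (t / π j)²)`. Expanding every logarithm as
`∑_m y^m / m` and summing over `j` first (all terms are nonnegative) turns the `m`-th column
into `ζ(2m) (t / π)^(2m) / m`, and Euler's formula for `ζ(2m)` in terms of `|B_{2m}|` yields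
`log (t / sin t) = ∑_m |B_{2m}| (2t)^(2m) / (2m (2m)!)`. On `(0, π)` the Lobachevsky integrand is
`-log (2t) + log (t / sin t)`; the first part integrates to `θ (1 - log 2θ)` and the power series
can be integrated termwise, being dominated by its (convergent) value at `θ`.
-/

/-- The Lobachevsky function `Л(θ) = ∫₀^θ -log |2 sin t| dt`. -/
noncomputable def lobachevsky (θ : ℝ) : ℝ := ∫ t in (0 : ℝ)..θ, -Real.log |2 * Real.sin t|

open Real
open scoped Nat

theorem HasSum.comm_of_nonneg {β γ : Type*} {f : β → γ → ℝ} {r : β → ℝ} {c : γ → ℝ} {a : ℝ}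
    (ha : HasSum r a) (hf : ∀ b g, 0 ≤ f b g) (hr : ∀ b, HasSum (f b) (r b))
    (hc : ∀ g, HasSum (fun b => f b g) (c g)) : HasSum c a := by
  have hF : Summable (Function.uncurry f) :=
    (summable_prod_of_nonneg fun p => hf p.1 p.2).2
      ⟨fun b => (hr b).summable, ha.summable.congr fun b => (hr b).tsum_eq.symm⟩
  have h := hF.hasSum
  rw [(h.prod_fiberwise hr).unique ha] at h
  exact ((Equiv.prodComm γ β).hasSum_iff.2 h).prod_fiberwise hc

theorem hasSum_one_div_nat_add_one_pow_two_mul {k : ℕ} (hk : k ≠ 0) :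
    HasSum (fun j : ℕ => 1 / ((j : ℝ) + 1) ^ (2 * k))
      (2 ^ (2 * k - 1) * π ^ (2 * k) * |(bernoulli (2 * k) : ℝ)| / (2 * k)!) := by
  have h := (hasSum_nat_add_iff' 1).2 (hasSum_zeta_nat hk)
  simp only [Finset.range_one, Finset.sum_singleton, Nat.cast_zero, Nat.cast_add, Nat.cast_one,
    zero_pow (by omega : 2 * k ≠ 0), div_zero, sub_zero] at h
  -- the sum is positive, which fixes the sign of `(-1) ^ (k + 1) * bernoulli (2 * k)`
  have hpos := one_pos.trans_le (by simpa using le_hasSum h 0 fun j _ => by positivity)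
  rw [← abs_of_pos hpos] at h
  simpa [abs_mul, abs_div, abs_of_pos pi_pos] using h

theorem sq_div_nat_add_one_sq_lt_one {x : ℝ} (hx : |x| < 1) (j : ℕ) :
    x ^ 2 / ((j : ℝ) + 1) ^ 2 < 1 := by
  rw [div_lt_one (by positivity)]
  calc x ^ 2 < 1 := (sq_lt_one_iff_abs_lt_one x).2 hx
    _ ≤ ((j : ℝ) + 1) ^ 2 := one_le_pow₀ (by linarith [j.cast_nonneg (α := ℝ)])

theorem hasSum_neg_log_one_sub_sq_div {x : ℝ} (h0 : 0 < x) (h1 : x < 1) :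
    HasSum (fun j : ℕ => -log (1 - x ^ 2 / ((j : ℝ) + 1) ^ 2))
      (log (π * x) - log (sin (π * x))) := by
  have hx : |x| < 1 := by rwa [abs_of_pos h0]
  have hfac : ∀ j : ℕ, 0 < 1 - x ^ 2 / ((j : ℝ) + 1) ^ 2 :=
    fun j => sub_pos.2 (sq_div_nat_add_one_sq_lt_one hx j)
  have hsin : 0 < sin (π * x) :=
    sin_pos_of_pos_of_lt_pi (by positivity) (mul_lt_of_lt_one_right pi_pos h1)
  rw [hasSum_iff_tendsto_nat_of_nonneg fun j =>
    neg_nonneg.2 (log_nonpos (hfac j).le (by simp only [sub_le_self_iff]; positivity))]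
  refine (((tendsto_euler_sin_prod x).log hsin.ne').const_sub (log (π * x))).congr fun n => ?_
  rw [log_mul (by positivity) (Finset.prod_ne_zero_iff.2 fun j _ => (hfac j).ne'),
    log_prod fun j _ => (hfac j).ne', Finset.sum_neg_distrib]
  ring

noncomputable def logSinCoeff (n : ℕ) : ℝ :=
  |(bernoulli (2 * (n + 1)) : ℝ)| * 2 ^ (2 * (n + 1)) / (2 * ((n : ℝ) + 1) * (2 * (n + 1))!)

theorem logSinCoeff_nonneg (n : ℕ) : 0 ≤ logSinCoeff n := by
  unfold logSinCoeff
  positivity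

theorem hasSum_log_sub_log_sin {t : ℝ} (h0 : 0 < t) (hπ : t < π) :
    HasSum (fun n => logSinCoeff n * t ^ (2 * (n + 1))) (log t - log (sin t)) := by
  set x := t / π
  have hx0 : 0 < x := div_pos h0 pi_pos
  have hxt : π * x = t := mul_div_cancel₀ t pi_pos.ne'
  have hx : |x| < 1 := by rwa [abs_of_pos hx0, div_lt_one pi_pos]
  have hrows := hasSum_neg_log_one_sub_sq_div hx0 ((div_lt_one pi_pos).2 hπ)
  rw [hxt] at hrows
  refine hrows.comm_of_nonneg
    (f := fun (j m : ℕ) => (x ^ 2 / ((j : ℝ) + 1) ^ 2) ^ (m + 1) / (m + 1))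
    (fun j m => by positivity) (fun j => ?_) (fun m => ?_)
  · refine hasSum_pow_div_log_of_abs_lt_one ?_
    rw [abs_of_nonneg (by positivity)]
    exact sq_div_nat_add_one_sq_lt_one hx j
  · have h2 : (2 : ℝ) ^ (2 * (m + 1)) = 2 * 2 ^ (2 * (m + 1) - 1) := by
      rw [← pow_succ', Nat.sub_add_cancel (by omega)]
    have hval : logSinCoeff m * t ^ (2 * (m + 1)) = x ^ (2 * (m + 1)) / ((m : ℝ) + 1) *
        (2 ^ (2 * (m + 1) - 1) * π ^ (2 * (m + 1)) * |(bernoulli (2 * (m + 1)) : ℝ)| /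
          (2 * (m + 1))!) := by
      rw [logSinCoeff, ← hxt, mul_pow, h2]
      field_simp
    rw [hval]
    refine ((hasSum_one_div_nat_add_one_pow_two_mul m.add_one_ne_zero).mul_left _).congr_fun
      fun j => ?_
    rw [div_pow, ← pow_mul, ← pow_mul]
    field_simp

theorem hasSum_integral_of_hasSum_mul_pow {a : ℕ → ℝ} {k : ℕ → ℕ} {f : ℝ → ℝ} {θ : ℝ}
    (ha : ∀ n, 0 ≤ a n) (hθ : 0 < θ)
    (hf : ∀ t ∈ Set.Ioc 0 θ, HasSum (fun n => a n * t ^ k n) (f t)) :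
    HasSum (fun n => a n * θ ^ (k n + 1) / (k n + 1)) (∫ t in 0..θ, f t) := by
  have hbound : ∀ n, ∀ t ∈ Set.Ioc 0 θ, ‖a n * t ^ k n‖ ≤ a n * θ ^ k n := fun n t ht => by
    rw [norm_of_nonneg (mul_nonneg (ha n) (pow_nonneg ht.1.le _))]
    exact mul_le_mul_of_nonneg_left (pow_le_pow_left₀ ht.1.le ht.2 _) (ha n)
  refine (intervalIntegral.hasSum_integral_of_dominated_convergence (fun n _ => a n * θ ^ k n)
    (fun n => (by fun_prop : Continuous fun t => a n * t ^ k n).aestronglyMeasurable)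
    (fun n => .of_forall fun t ht => hbound n t (Set.uIoc_of_le hθ.le ▸ ht))
    (.of_forall fun _ _ => (hf θ ⟨hθ, le_rfl⟩).summable) intervalIntegrable_const
    (.of_forall fun t ht => hf t (Set.uIoc_of_le hθ.le ▸ ht))).congr_fun fun n => ?_
  rw [intervalIntegral.integral_const_mul, integral_pow]
  simp [zero_pow (Nat.succ_ne_zero _), mul_div_assoc]

theorem integral_neg_log_two_mul (θ : ℝ) :
    ∫ t in 0..θ, -log (2 * t) = θ * (1 - log (2 * θ)) := by
  rw [intervalIntegral.integral_neg, intervalIntegral.integral_comp_mul_left (fun t => log t)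
    two_ne_zero, integral_log]
  simp only [mul_zero, log_zero, sub_zero, add_zero, smul_eq_mul]
  ring

theorem neg_log_abs_two_mul_sin {t : ℝ} (h0 : 0 < t) (hπ : t < π) :
    -log |2 * sin t| = -log (2 * t) + (log t - log (sin t)) := by
  have hsin := sin_pos_of_pos_of_lt_pi h0 hπ
  rw [abs_of_pos (by positivity), log_mul two_ne_zero hsin.ne', log_mul two_ne_zero h0.ne']
  ring

theorem abs_bernoulli_term_eq_logSinCoeff_mul_pow_div (θ : ℝ) (n : ℕ) :
    |((bernoulli (2 * (n + 1)) : ℚ) : ℝ)| * (2 * θ) ^ (2 * (n + 1)) /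
        ((2 * ((n : ℝ) + 1)) * (Nat.factorial (2 * (n + 1) + 1) : ℝ)) =
      logSinCoeff n * θ ^ (2 * (n + 1)) / ((2 * (n + 1) : ℕ) + 1) := by
  rw [logSinCoeff, Nat.factorial_succ]
  push_cast
  field_simp
  ring

/-- For `0 < θ < π`,
`Л(θ) = θ * (1 - log (2θ) + ∑_{n=1}^∞ |B_{2n}| (2θ)^(2n) / (2n (2n+1)!))`,
the series being convergent. -/
theorem stmt5 (θ : ℝ) (h0 : 0 < θ) (hπ : θ < Real.pi) :
    Summable (fun n : ℕ =>
      |((bernoulli (2 * (n + 1)) : ℚ) : ℝ)| * (2 * θ) ^ (2 * (n + 1)) /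
        ((2 * ((n : ℝ) + 1)) * (Nat.factorial (2 * (n + 1) + 1) : ℝ))) ∧
    lobachevsky θ = θ * (1 - Real.log (2 * θ) +
      ∑' n : ℕ, |((bernoulli (2 * (n + 1)) : ℚ) : ℝ)| * (2 * θ) ^ (2 * (n + 1)) /
        ((2 * ((n : ℝ) + 1)) * (Nat.factorial (2 * (n + 1) + 1) : ℝ))) := by
  simp_rw [abs_bernoulli_term_eq_logSinCoeff_mul_pow_div]
  have hseries : HasSum
      (fun n => θ * (logSinCoeff n * θ ^ (2 * (n + 1)) / ((2 * (n + 1) : ℕ) + 1)))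
      (∫ t in 0..θ, (log t - log (sin t))) :=
    (hasSum_integral_of_hasSum_mul_pow logSinCoeff_nonneg h0 fun t ht =>
      hasSum_log_sub_log_sin ht.1 (ht.2.trans_lt hπ)).congr_fun fun n => by ring
  refine ⟨(summable_mul_left_iff h0.ne').1 hseries.summable, ?_⟩
  have hsplit : lobachevsky θ = ∫ t in 0..θ, (-log (2 * t) + (log t - log (sin t))) := by
    refine intervalIntegral.integral_congr_ae (.of_forall fun t ht => ?_)
    rw [Set.uIoc_of_le h0.le] at ht
    exact neg_log_abs_two_mul_sin ht.1 (ht.2.trans_lt hπ)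
  rw [hsplit, intervalIntegral.integral_add, integral_neg_log_two_mul, ← hseries.tsum_eq,
    tsum_mul_left, mul_add]
  · refine IntervalIntegrable.neg (f := fun t => log (2 * t)) ?_
    simpa using (intervalIntegral.intervalIntegrable_log' (a := 0) (b := 2 * θ)).comp_mul_left
      (c := 2)
  · exact intervalIntegral.intervalIntegrable_log'.sub intervalIntegrable_log_sin
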